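/- arXiv:1209.1767 — 4 statements merged into one kernel-verified Lean document; each statement's English description precedes it below -/
import Mathlib

section
/- Let H be a Hilbert space and M, N closed subspaces. The gap δ̂(M,N) := max{δ(M,N), δ(N,M)} equals the operator norm ‖P_M − P_N‖, where P_M and P_N are the orthogonal projections onto M and N respectively. -/
noncomputable section

open ContinuousLinearMap

/-- δ(M,N) = sup{dist(x,N) : x ∈ M, ‖x‖ = 1}, with sSup ∅ = 0 covering M = {0}. -/
def gapDelta {H : Type*} [NormedAddCommGroup H] (M N : Set H) : ℝ :=
  sSup ((fun x => Metric.infDist x N) '' {x | x ∈ M ∧ ‖x‖ = 1})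

/-- The gap δ̂(M,N) = max{δ(M,N), δ(N,M)}. -/
def gapHat {H : Type*} [NormedAddCommGroup H] (M N : Set H) : ℝ :=
  max (gapDelta M N) (gapDelta N M)

/-- Orthogonal projection onto a closed subspace, as an operator H →L[ℂ] H. -/
def projCLM {H : Type*} [NormedAddCommGroup H] [InnerProductSpace ℂ H] [CompleteSpace H]
    (K : Submodule ℂ H) (hK : IsClosed (K : Set H)) : H →L[ℂ] H :=
  haveI := hK.completeSpace_coe
  K.subtypeL.comp K.orthogonalProjectionOnto

/-- G is the outer inverse A_{T,S}^{(2)}: GAG = G, R(G) = T, N(G) = S. -/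
def IsOuterInv {X Y : Type*} [NormedAddCommGroup X] [NormedSpace ℂ X]
    [NormedAddCommGroup Y] [NormedSpace ℂ Y]
    (A : X →L[ℂ] Y) (T : Submodule ℂ X) (S : Submodule ℂ Y) (G : Y →L[ℂ] X) : Prop :=
  G ∘L (A ∘L G) = G ∧ LinearMap.range (G : Y →ₗ[ℂ] X) = T ∧ LinearMap.ker (G : Y →ₗ[ℂ] X) = S

/-- B is the Moore–Penrose inverse of A. -/
def IsMPInv {X Y : Type*} [NormedAddCommGroup X] [InnerProductSpace ℂ X] [CompleteSpace X]
    [NormedAddCommGroup Y] [InnerProductSpace ℂ Y] [CompleteSpace Y]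
    (A : X →L[ℂ] Y) (B : Y →L[ℂ] X) : Prop :=
  A ∘L (B ∘L A) = A ∧ B ∘L (A ∘L B) = B ∧
  adjoint (A ∘L B) = A ∘L B ∧ adjoint (B ∘L A) = B ∘L A

/-! Since `dist(x, N) = ‖P_{N⊥} x‖`, `δ(M, N)` is the norm of `P_{N⊥}` on the unit sphere of `M`,
that is `‖P_{N⊥} P_M‖`. This is at most `‖P_M - P_N‖` because `P_{N⊥} P_M = P_{N⊥} (P_M - P_N)`.
Conversely, `w = (P_M - P_N) x` has components `P_{N⊥} w = P_{N⊥} P_M (P_M x)` and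
`P_N w = -P_N P_{M⊥} (P_{M⊥} x)`, and `‖P_N P_{M⊥}‖ = ‖P_{M⊥} P_N‖` by taking adjoints; Pythagoras
in `N ⊕ N⊥` and in `M ⊕ M⊥` then bounds `‖w‖` by `max (‖P_{N⊥} P_M‖, ‖P_{M⊥} P_N‖) ‖x‖`. -/

theorem IsSelfAdjoint.norm_mul_comm {A : Type*} [NonUnitalNormedRing A] [StarRing A]
    [NormedStarGroup A] {a b : A} (ha : IsSelfAdjoint a) (hb : IsSelfAdjoint b) :
    ‖a * b‖ = ‖b * a‖ := by
  rw [← norm_star, star_mul, ha.star_eq, hb.star_eq]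

theorem ContinuousLinearMap.sSup_norm_image_unit_mem_eq_norm_comp_subtypeL
    {𝕜 E F : Type*} [RCLike 𝕜] [NormedAddCommGroup E] [NormedSpace 𝕜 E]
    [NormedAddCommGroup F] [NormedSpace 𝕜 F] (T : E →L[𝕜] F) (M : Submodule 𝕜 E) :
    sSup ((fun x => ‖T x‖) '' {x | x ∈ M ∧ ‖x‖ = 1}) = ‖T ∘L M.subtypeL‖ := by
  have hsphere : {x | x ∈ M ∧ ‖x‖ = 1} = ((↑) : M → E) '' Metric.sphere 0 1 := by
    ext x
    constructor
    · rintro ⟨hxM, hx⟩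
      exact ⟨⟨x, hxM⟩, by simpa using hx, rfl⟩
    · rintro ⟨y, hy, rfl⟩
      exact ⟨y.2, by simpa using hy⟩
  rw [hsphere, Set.image_image, ← (T ∘L M.subtypeL).sSup_sphere_eq_norm]
  rfl

namespace Submodule

variable {𝕜 E : Type*} [RCLike 𝕜] [NormedAddCommGroup E] [InnerProductSpace 𝕜 E]

theorem infDist_eq_norm_starProjection_orthogonal (K : Submodule 𝕜 E)
    [K.HasOrthogonalProjection] (x : E) :
    Metric.infDist x (K : Set E) = ‖Kᗮ.starProjection x‖ := by
  rw [Metric.infDist_eq_iInf, starProjection_orthogonal, sub_apply, id_apply,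
    starProjection_minimal]
  exact iInf_congr fun y => dist_eq_norm _ _

@[simp]
theorem starProjection_starProjection (K : Submodule 𝕜 E) [K.HasOrthogonalProjection] (x : E) :
    K.starProjection (K.starProjection x) = K.starProjection x :=
  K.starProjection_eq_self_iff.mpr (K.starProjection_apply_mem x)

theorem norm_comp_starProjection {F : Type*} [NormedAddCommGroup F] [NormedSpace 𝕜 F]
    (T : E →L[𝕜] F) (K : Submodule 𝕜 E) [K.HasOrthogonalProjection] :
    ‖T ∘L K.starProjection‖ = ‖T ∘L K.subtypeL‖ := by
  refine le_antisymm ?_ ?_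
  · calc ‖T ∘L K.starProjection‖ = ‖(T ∘L K.subtypeL) ∘L K.orthogonalProjectionOnto‖ := rfl
      _ ≤ ‖T ∘L K.subtypeL‖ * ‖K.orthogonalProjectionOnto‖ := opNorm_comp_le _ _
      _ ≤ ‖T ∘L K.subtypeL‖ := mul_le_of_le_one_right (norm_nonneg _)
            K.orthogonalProjectionOnto_norm_le
  · have : T ∘L K.subtypeL = (T ∘L K.starProjection) ∘L K.subtypeL := by
      ext x
      simp
    calc ‖T ∘L K.subtypeL‖ = ‖(T ∘L K.starProjection) ∘L K.subtypeL‖ := by rw [← this]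
      _ ≤ ‖T ∘L K.starProjection‖ * ‖K.subtypeL‖ := opNorm_comp_le _ _
      _ ≤ ‖T ∘L K.starProjection‖ := mul_le_of_le_one_right (norm_nonneg _)
            K.norm_subtypeL_le

end Submodule

section Gap

variable {𝕜 E : Type*} [RCLike 𝕜] [NormedAddCommGroup E] [InnerProductSpace 𝕜 E]

theorem gapDelta_eq_norm_starProjection_comp (M N : Submodule 𝕜 E) [M.HasOrthogonalProjection]
    [N.HasOrthogonalProjection] :
    gapDelta (M : Set E) (N : Set E) = ‖Nᗮ.starProjection ∘L M.starProjection‖ := by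
  have hdist : (fun x => Metric.infDist x (N : Set E)) = fun x => ‖Nᗮ.starProjection x‖ :=
    funext N.infDist_eq_norm_starProjection_orthogonal
  rw [gapDelta, hdist, Submodule.norm_comp_starProjection]
  exact Nᗮ.starProjection.sSup_norm_image_unit_mem_eq_norm_comp_subtypeL M

theorem norm_starProjection_orthogonal_comp_le_norm_sub (M N : Submodule 𝕜 E)
    [M.HasOrthogonalProjection] [N.HasOrthogonalProjection] :
    ‖Nᗮ.starProjection ∘L M.starProjection‖ ≤ ‖M.starProjection - N.starProjection‖ := by
  have hNperpN : Nᗮ.starProjection ∘L N.starProjection = 0 :=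
    N.isOrtho_orthogonal_left.starProjection_comp_starProjection
  calc ‖Nᗮ.starProjection ∘L M.starProjection‖
      = ‖Nᗮ.starProjection ∘L (M.starProjection - N.starProjection)‖ := by
        rw [comp_sub, hNperpN, sub_zero]
    _ ≤ ‖Nᗮ.starProjection‖ * ‖M.starProjection - N.starProjection‖ := opNorm_comp_le _ _
    _ ≤ ‖M.starProjection - N.starProjection‖ :=
        mul_le_of_le_one_left (norm_nonneg _) Nᗮ.starProjection_norm_le

theorem norm_starProjection_sub_starProjection_le [CompleteSpace E] (M N : Submodule 𝕜 E)
    [M.HasOrthogonalProjection] [N.HasOrthogonalProjection] :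
    ‖M.starProjection - N.starProjection‖ ≤
      max ‖Nᗮ.starProjection ∘L M.starProjection‖ ‖Mᗮ.starProjection ∘L N.starProjection‖ := by
  set P := M.starProjection
  set Q := N.starProjection
  set c := max ‖Nᗮ.starProjection ∘L P‖ ‖Mᗮ.starProjection ∘L Q‖
  have hc : 0 ≤ c := le_max_of_le_left (norm_nonneg _)
  have hQP' : ‖Q ∘L Mᗮ.starProjection‖ ≤ c := by
    rw [show Q ∘L Mᗮ.starProjection = Q * Mᗮ.starProjection from rfl,
      (isSelfAdjoint_starProjection N).norm_mul_comm (isSelfAdjoint_starProjection Mᗮ)]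
    exact le_max_right _ _
  refine opNorm_le_bound _ hc fun x => ?_
  have hQ : ‖Q ((P - Q) x)‖ ≤ c * ‖Mᗮ.starProjection x‖ := by
    have : Q ((P - Q) x) = -(Q ∘L Mᗮ.starProjection) (Mᗮ.starProjection x) := by
      rw [comp_apply, Mᗮ.starProjection_starProjection, M.starProjection_orthogonal']
      simp [P, Q]
    rw [this, norm_neg]
    exact (le_opNorm _ _).trans (by gcongr)
  have hQ' : ‖Nᗮ.starProjection ((P - Q) x)‖ ≤ c * ‖P x‖ := by
    have : Nᗮ.starProjection ((P - Q) x) = (Nᗮ.starProjection ∘L P) (P x) := by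
      rw [comp_apply, M.starProjection_starProjection, sub_apply, map_sub,
        N.starProjection_orthogonal_apply_eq_zero (N.starProjection_apply_mem x), sub_zero]
    rw [this]
    exact (le_opNorm _ _).trans (by gcongr; exact le_max_left _ _)
  refine le_of_pow_le_pow_left₀ two_ne_zero (by positivity) ?_
  calc ‖(P - Q) x‖ ^ 2 = ‖Q ((P - Q) x)‖ ^ 2 + ‖Nᗮ.starProjection ((P - Q) x)‖ ^ 2 :=
        Submodule.norm_sq_eq_add_norm_sq_starProjection _ N
    _ ≤ (c * ‖Mᗮ.starProjection x‖) ^ 2 + (c * ‖P x‖) ^ 2 := by gcongr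
    _ = (c * ‖x‖) ^ 2 := by
        rw [mul_pow, mul_pow, mul_pow, Submodule.norm_sq_eq_add_norm_sq_starProjection x M]
        ring

theorem norm_starProjection_sub_starProjection [CompleteSpace E] (M N : Submodule 𝕜 E)
    [M.HasOrthogonalProjection] [N.HasOrthogonalProjection] :
    ‖M.starProjection - N.starProjection‖ =
      max ‖Nᗮ.starProjection ∘L M.starProjection‖ ‖Mᗮ.starProjection ∘L N.starProjection‖ :=
  le_antisymm (norm_starProjection_sub_starProjection_le M N) <|
    max_le (norm_starProjection_orthogonal_comp_le_norm_sub M N)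
      (norm_sub_rev M.starProjection N.starProjection ▸
        norm_starProjection_orthogonal_comp_le_norm_sub N M)

end Gap

theorem projCLM_eq_starProjection {H : Type*} [NormedAddCommGroup H] [InnerProductSpace ℂ H]
    [CompleteSpace H] (K : Submodule ℂ H) [K.HasOrthogonalProjection] (hK : IsClosed (K : Set H)) :
    projCLM K hK = K.starProjection :=
  rfl

variable {X Y : Type*} [NormedAddCommGroup X] [InnerProductSpace ℂ X] [CompleteSpace X]
  [NormedAddCommGroup Y] [InnerProductSpace ℂ Y] [CompleteSpace Y]
theorem stmt_1 {H : Type*} [NormedAddCommGroup H] [InnerProductSpace ℂ H] [CompleteSpace H]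
    (M N : Submodule ℂ H) (hM : IsClosed (M : Set H)) (hN : IsClosed (N : Set H)) :
    gapHat (M : Set H) (N : Set H) = ‖projCLM M hM - projCLM N hN‖ := by
  have := hM.completeSpace_coe
  have := hN.completeSpace_coe
  rw [gapHat, gapDelta_eq_norm_starProjection_comp, gapDelta_eq_norm_starProjection_comp,
    projCLM_eq_starProjection, projCLM_eq_starProjection, norm_starProjection_sub_starProjection]
end
end

section
/- Let X, Y be Hilbert spaces, A ∈ B(X,Y), and T ⊆ X, S ⊆ Y closed subspaces such that the outer inverse G = A_{T,S}^{(2)} exists. Then the operator P_{S^⊥} A P_T has closed range equal to S^⊥ and kernel equal to T^⊥. -/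
/-!
Since `GAG = G`, the operator `GA` is the identity on `T = R(G)`, and `I - AG` maps `Y` into
`S = N(G)`. Hence for `s ∈ Sᗮ` we get `P_{Sᗮ} A P_T (G s) = P_{Sᗮ} (A G s) = P_{Sᗮ} s = s`, while
`P_{Sᗮ} A P_T x = 0` means `A (P_T x) ∈ S`, i.e. `P_T x = GA (P_T x) = 0`, i.e. `x ∈ Tᗮ`.
-/

noncomputable section

open ContinuousLinearMap

section projCLM

variable {H : Type*} [NormedAddCommGroup H] [InnerProductSpace ℂ H] [CompleteSpace H]
  (K : Submodule ℂ H) (hK : IsClosed (K : Set H))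

theorem projCLM_apply_mem (x : H) : projCLM K hK x ∈ K :=
  haveI := hK.completeSpace_coe
  K.starProjection_apply_mem x

theorem projCLM_apply_eq_self_iff {x : H} : projCLM K hK x = x ↔ x ∈ K :=
  haveI := hK.completeSpace_coe
  K.starProjection_eq_self_iff

theorem projCLM_apply_eq_zero_iff {x : H} : projCLM K hK x = 0 ↔ x ∈ Kᗮ :=
  haveI := hK.completeSpace_coe
  K.starProjection_apply_eq_zero_iff

theorem projCLM_orthogonal_apply_eq_zero_iff (hK : IsClosed (K : Set H)) {x : H} :
    projCLM Kᗮ (Submodule.isClosed_orthogonal K) x = 0 ↔ x ∈ K := by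
  have := hK.completeSpace_coe
  rw [projCLM_apply_eq_zero_iff, Submodule.orthogonal_orthogonal]

end projCLM

namespace IsOuterInv

variable {E F : Type*} [NormedAddCommGroup E] [NormedSpace ℂ E]
  [NormedAddCommGroup F] [NormedSpace ℂ F]
  {A : E →L[ℂ] F} {T : Submodule ℂ E} {S : Submodule ℂ F} {G : F →L[ℂ] E}

theorem apply_mem (hG : IsOuterInv A T S G) (y : F) : G y ∈ T :=
  hG.2.1 ▸ LinearMap.mem_range_self (G : F →ₗ[ℂ] E) y

theorem apply_eq_zero_iff (hG : IsOuterInv A T S G) {y : F} : G y = 0 ↔ y ∈ S := by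
  rw [← hG.2.2, LinearMap.mem_ker, coe_coe]

theorem apply_map_of_mem (hG : IsOuterInv A T S G) {x : E} (hx : x ∈ T) : G (A x) = x := by
  obtain ⟨y, rfl⟩ : x ∈ LinearMap.range (G : F →ₗ[ℂ] E) := hG.2.1 ▸ hx
  exact congrArg (fun B : F →L[ℂ] E => B y) hG.1

theorem isClosed_ker (hG : IsOuterInv A T S G) : IsClosed (S : Set F) :=
  hG.2.2 ▸ G.isClosed_ker

theorem sub_map_apply_mem (hG : IsOuterInv A T S G) (y : F) : y - A (G y) ∈ S := by
  rw [← hG.apply_eq_zero_iff, map_sub, hG.apply_map_of_mem (hG.apply_mem y), sub_self]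

theorem eq_zero_of_map_mem (hG : IsOuterInv A T S G) {x : E} (hx : x ∈ T) (hAx : A x ∈ S) :
    x = 0 := by
  rw [← hG.apply_map_of_mem hx, hG.apply_eq_zero_iff.mpr hAx]

end IsOuterInv

variable {X Y : Type*} [NormedAddCommGroup X] [InnerProductSpace ℂ X] [CompleteSpace X]
  [NormedAddCommGroup Y] [InnerProductSpace ℂ Y] [CompleteSpace Y]
theorem stmt_5_general (A : X →L[ℂ] Y) (T : Submodule ℂ X) (S : Submodule ℂ Y)
    (hT : IsClosed (T : Set X))
    (G : Y →L[ℂ] X) (hG : IsOuterInv A T S G) :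
    IsClosed ((LinearMap.range ((projCLM Sᗮ (Submodule.isClosed_orthogonal S) ∘L
        (A ∘L projCLM T hT) : X →L[ℂ] Y) : X →ₗ[ℂ] Y) : Submodule ℂ Y) : Set Y) ∧
    LinearMap.range ((projCLM Sᗮ (Submodule.isClosed_orthogonal S) ∘L (A ∘L projCLM T hT) : X →L[ℂ] Y) : X →ₗ[ℂ] Y) = Sᗮ ∧
    LinearMap.ker ((projCLM Sᗮ (Submodule.isClosed_orthogonal S) ∘L (A ∘L projCLM T hT) : X →L[ℂ] Y) : X →ₗ[ℂ] Y) = Tᗮ := by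
  have hS := hG.isClosed_ker
  set PS := projCLM Sᗮ (Submodule.isClosed_orthogonal S)
  set PT := projCLM T hT
  have hrange : LinearMap.range ((PS ∘L (A ∘L PT) : X →L[ℂ] Y) : X →ₗ[ℂ] Y) = Sᗮ := by
    refine le_antisymm ?_ fun s hs => ⟨G s, ?_⟩
    · rintro _ ⟨x, rfl⟩
      exact projCLM_apply_mem _ (Submodule.isClosed_orthogonal S) _
    · have hPS : PS (s - A (G s)) = 0 :=
        (projCLM_orthogonal_apply_eq_zero_iff S hS).mpr (hG.sub_map_apply_mem s)
      rw [map_sub, sub_eq_zero, (projCLM_apply_eq_self_iff _ _).mpr hs] at hPS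
      simp only [coe_coe, comp_apply, PT, (projCLM_apply_eq_self_iff T hT).mpr (hG.apply_mem s)]
      exact hPS.symm
  refine ⟨hrange ▸ Submodule.isClosed_orthogonal S, hrange, ?_⟩
  ext x
  have hPT : PT x = 0 ↔ A (PT x) ∈ S :=
    ⟨fun h => by rw [h, map_zero]; exact S.zero_mem, hG.eq_zero_of_map_mem (projCLM_apply_mem T hT x)⟩
  rw [LinearMap.mem_ker, coe_coe, comp_apply, comp_apply, projCLM_orthogonal_apply_eq_zero_iff S hS,
    ← hPT, projCLM_apply_eq_zero_iff]

theorem stmt_5 (A : X →L[ℂ] Y) (T : Submodule ℂ X) (S : Submodule ℂ Y)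
    (hT : IsClosed (T : Set X)) (hS : IsClosed (S : Set Y))
    (G : Y →L[ℂ] X) (hG : IsOuterInv A T S G) :
    IsClosed ((LinearMap.range ((projCLM Sᗮ (Submodule.isClosed_orthogonal S) ∘L
        (A ∘L projCLM T hT) : X →L[ℂ] Y) : X →ₗ[ℂ] Y) : Submodule ℂ Y) : Set Y) ∧
    LinearMap.range ((projCLM Sᗮ (Submodule.isClosed_orthogonal S) ∘L (A ∘L projCLM T hT) : X →L[ℂ] Y) : X →ₗ[ℂ] Y) = Sᗮ ∧
    LinearMap.ker ((projCLM Sᗮ (Submodule.isClosed_orthogonal S) ∘L (A ∘L projCLM T hT) : X →L[ℂ] Y) : X →ₗ[ℂ] Y) = Tᗮ :=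
  stmt_5_general A T S hT G hG
end
end

section
/- Let H be a Hilbert space, M a closed subspace of H, and P ∈ B(H) an idempotent operator with range M. If M' is a closed subspace of H with δ̂(M,M') < 1/(1 + ‖P‖), then H = R(I−P) ⊕ M' (topological direct sum), i.e., M' is a complement of the kernel-range R(I−P) of P. -/
/-!
For `y ∈ M'` and every `m ∈ M = R(P)` we have `y - Py = (y - m) - P(y - m)`, so
`‖y - Py‖ ≤ (1 + ‖P‖) dist(y, M) ≤ (1 + ‖P‖) δ(M', M) ‖y‖`; hence `P` is bounded below on `M'`:
it is injective there and `P(M')` is closed. Conversely every `z ∈ M` satisfies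
`dist(z, P(M')) ≤ ‖P‖ dist(z, M') ≤ ‖P‖ δ(M, M') ‖z‖` with `‖P‖ δ(M, M') < 1`, and by Riesz's lemma
this forces the closed subspace `P(M') ⊆ M` to be all of `M`. So `M'` is a complement of
`N(P) = R(I - P)`.
-/

noncomputable section

open ContinuousLinearMap

variable {X Y : Type*} [NormedAddCommGroup X] [InnerProductSpace ℂ X] [CompleteSpace X]
  [NormedAddCommGroup Y] [InnerProductSpace ℂ Y] [CompleteSpace Y]

open Metric

theorem LipschitzWith.infDist_le_mul_infDist {α β : Type*} [PseudoMetricSpace α]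
    [PseudoMetricSpace β] {K : NNReal} {f : α → β} (hf : LipschitzWith K f) {s : Set α}
    {t : Set β} (hst : Set.MapsTo f s t) (hs : s.Nonempty) (x : α) :
    infDist (f x) t ≤ K * infDist x s := by
  have := hs.to_subtype
  rw [infDist_eq_iInf (s := s), Real.mul_iInf_of_nonneg K.coe_nonneg]
  exact le_ciInf fun y ↦ (infDist_le_dist_of_mem (hst y.2)).trans (hf.dist_le_mul x y)

theorem LinearMap.isCompl_ker_of_disjoint_of_range_le_map {R E F : Type*} [Ring R]
    [AddCommGroup E] [Module R E] [AddCommGroup F] [Module R F] {f : E →ₗ[R] F}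
    {p : Submodule R E} (hd : Disjoint (LinearMap.ker f) p) (hr : LinearMap.range f ≤ p.map f) :
    IsCompl (LinearMap.ker f) p := by
  refine ⟨hd, codisjoint_iff.2 ?_⟩
  rw [sup_comm, ← Submodule.comap_map_eq, le_antisymm LinearMap.map_le_range hr]
  exact eq_top_iff.2 fun x _ ↦ LinearMap.mem_range_self f x

section NontriviallyNormedField

variable {𝕜 E F : Type*} [NontriviallyNormedField 𝕜] [NormedAddCommGroup E] [NormedSpace 𝕜 E]
  [NormedAddCommGroup F] [NormedSpace 𝕜 F]

theorem Submodule.le_of_forall_infDist_le_mul_norm {W M : Submodule 𝕜 E}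
    (hW : IsClosed (W : Set E)) (hWM : W ≤ M) {c : ℝ} (hc : c < 1)
    (h : ∀ x ∈ M, infDist x (W : Set E) ≤ c * ‖x‖) : M ≤ W := by
  by_contra hMW
  obtain ⟨m, hm, hmW⟩ := SetLike.not_le_iff_exists.1 hMW
  obtain ⟨r, hcr, hr⟩ := exists_between hc
  -- Riesz's lemma, applied in the normed space `M` to its closed subspace `W`
  obtain ⟨x, hxW, hx⟩ := riesz_lemma (F := W.comap M.subtype)
    (hW.preimage continuous_subtype_val) ⟨⟨m, hm⟩, hmW⟩ hr
  have hx0 : 0 < ‖(x : E)‖ :=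
    norm_pos_iff.2 fun h0 ↦ hxW (by simp [Submodule.mem_comap, h0, W.zero_mem])
  have hr_le : r * ‖(x : E)‖ ≤ infDist (x : E) W :=
    (le_infDist ⟨0, W.zero_mem⟩).2 fun w hw ↦ by
      simpa [dist_eq_norm] using hx ⟨w, hWM hw⟩ hw
  nlinarith [h x x.2]

theorem ContinuousLinearMap.isClosed_map_of_mul_norm_le [CompleteSpace E] (f : E →L[𝕜] F)
    {p : Submodule 𝕜 E} (hp : IsClosed (p : Set E)) {ε : ℝ} (hε : 0 < ε)
    (h : ∀ x ∈ p, ε * ‖x‖ ≤ ‖f x‖) : IsClosed (p.map (f : E →ₗ[𝕜] F) : Set F) := by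
  have := hp.completeSpace_coe
  have hanti : AntilipschitzWith (ε⁻¹).toNNReal (f ∘L p.subtypeL) :=
    (f ∘L p.subtypeL).antilipschitz_of_bound fun x ↦ by
      rw [Real.coe_toNNReal _ (inv_nonneg.2 hε.le), inv_mul_eq_div, le_div_iff₀' hε]
      exact h x x.2
  convert hanti.isClosed_range (f ∘L p.subtypeL).uniformContinuous using 1
  ext
  simp

theorem ContinuousLinearMap.norm_sub_apply_le_mul_infDist_range {P : E →L[𝕜] E}
    (hP : IsIdempotentElem P) (y : E) : ‖y - P y‖ ≤ (1 + ‖P‖) * infDist y P.range := by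
  have hmaps : Set.MapsTo (fun z ↦ z - P z) P.range {0} := fun z hz ↦ by
    have hPz : P z = z := (LinearMap.IsIdempotentElem.mem_range_iff hP.toLinearMap).1 hz
    simp [hPz]
  simpa using (LipschitzWith.id.sub P.lipschitz).infDist_le_mul_infDist hmaps ⟨0, zero_mem _⟩ y

end NontriviallyNormedField

section RCLike

variable {𝕜 E : Type*} [RCLike 𝕜] [NormedAddCommGroup E] [NormedSpace 𝕜 E]

theorem gapDelta_nonneg (M N : Set E) : 0 ≤ gapDelta M N :=
  Real.sSup_nonneg <| by rintro _ ⟨x, -, rfl⟩; exact infDist_nonneg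

theorem infDist_le_gapDelta_mul_norm {M N : Submodule 𝕜 E} {x : E} (hx : x ∈ M) :
    infDist x N ≤ gapDelta (M : Set E) N * ‖x‖ := by
  rcases eq_or_ne x 0 with rfl | hx0
  · simp [infDist_zero_of_mem N.zero_mem]
  set u := (‖x‖⁻¹ : 𝕜) • x
  have hu : u ∈ M ∧ ‖u‖ = 1 := ⟨M.smul_mem _ hx, norm_smul_inv_norm hx0⟩
  have hbdd : BddAbove ((fun y ↦ infDist y N) '' {y | y ∈ M ∧ ‖y‖ = 1}) := by
    refine ⟨1, ?_⟩
    rintro _ ⟨y, ⟨-, hy⟩, rfl⟩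
    simpa [hy] using infDist_le_dist_of_mem (x := y) N.zero_mem
  calc infDist x N = infDist ((‖x‖ : 𝕜) • u) N := by
        rw [smul_inv_smul₀ (by simpa using hx0)]
    _ ≤ ‖x‖ * infDist u N := by
        simpa using (lipschitzWith_smul (‖x‖ : 𝕜)).infDist_le_mul_infDist
          (fun _ hy ↦ N.smul_mem _ hy) ⟨0, N.zero_mem⟩ u
    _ ≤ ‖x‖ * gapDelta (M : Set E) N := by gcongr; exact le_csSup hbdd ⟨u, hu, rfl⟩
    _ = gapDelta (M : Set E) N * ‖x‖ := mul_comm _ _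

variable {P : E →L[𝕜] E} {M' : Submodule 𝕜 E}

theorem ContinuousLinearMap.one_sub_mul_gapDelta_mul_norm_le (hP : IsIdempotentElem P)
    {y : E} (hy : y ∈ M') : (1 - (1 + ‖P‖) * gapDelta (M' : Set E) P.range) * ‖y‖ ≤ ‖P y‖ := by
  have hdist := P.norm_sub_apply_le_mul_infDist_range hP y
  have hgap := mul_le_mul_of_nonneg_left (infDist_le_gapDelta_mul_norm (N := P.range) hy)
    (by positivity : (0 : ℝ) ≤ 1 + ‖P‖)
  linarith [norm_sub_norm_le y (P y)]

theorem ContinuousLinearMap.range_le_map_of_norm_mul_gapDelta_lt (hP : IsIdempotentElem P)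
    (hW : IsClosed (M'.map (P : E →ₗ[𝕜] E) : Set E))
    (hgap : ‖P‖ * gapDelta (P.range : Set E) M' < 1) : P.range ≤ M'.map (P : E →ₗ[𝕜] E) := by
  refine Submodule.le_of_forall_infDist_le_mul_norm hW LinearMap.map_le_range hgap fun z hz ↦ ?_
  have hPz : P z = z := (LinearMap.IsIdempotentElem.mem_range_iff hP.toLinearMap).1 hz
  calc infDist z (M'.map (P : E →ₗ[𝕜] E) : Set E)
      = infDist (P z) (M'.map (P : E →ₗ[𝕜] E) : Set E) := by rw [hPz]
    _ ≤ ‖P‖ * infDist z M' := P.lipschitz.infDist_le_mul_infDist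
          (fun y hy ↦ Submodule.mem_map_of_mem hy) ⟨0, M'.zero_mem⟩ z
    _ ≤ ‖P‖ * (gapDelta (P.range : Set E) M' * ‖z‖) := by
          gcongr; exact infDist_le_gapDelta_mul_norm hz
    _ = ‖P‖ * gapDelta (P.range : Set E) M' * ‖z‖ := by ring

theorem ContinuousLinearMap.isCompl_ker_of_gapHat_lt [CompleteSpace E] (hP : IsIdempotentElem P)
    (hM' : IsClosed (M' : Set E)) (hgap : gapHat (P.range : Set E) M' < 1 / (1 + ‖P‖)) :
    IsCompl P.ker M' := by
  obtain ⟨hgap₁, hgap₂⟩ := max_lt_iff.1 hgap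
  rw [lt_div_iff₀' (by positivity)] at hgap₁ hgap₂
  have hbelow : 0 < 1 - (1 + ‖P‖) * gapDelta (M' : Set E) P.range := by linarith
  refine LinearMap.isCompl_ker_of_disjoint_of_range_le_map ?_ ?_
  · refine Submodule.disjoint_def.2 fun y hyP hy ↦ norm_le_zero_iff.1 ?_
    have hPy : P y = 0 := hyP
    have := P.one_sub_mul_gapDelta_mul_norm_le hP hy
    rw [hPy, norm_zero] at this
    nlinarith [norm_nonneg y]
  · refine P.range_le_map_of_norm_mul_gapDelta_lt hP
      (P.isClosed_map_of_mul_norm_le hM' hbelow fun y ↦ P.one_sub_mul_gapDelta_mul_norm_le hP) ?_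
    linarith [gapDelta_nonneg (P.range : Set E) M']

end RCLike

theorem stmt_8_general {H : Type*} [NormedAddCommGroup H] [InnerProductSpace ℂ H] [CompleteSpace H]
    (M M' : Submodule ℂ H) (hM' : IsClosed (M' : Set H))
    (P : H →L[ℂ] H) (hP : P ∘L P = P) (hPr : LinearMap.range (P : H →ₗ[ℂ] H) = M)
    (hgap : gapHat (M : Set H) (M' : Set H) < 1 / (1 + ‖P‖)) :
    IsCompl (LinearMap.range (((1 : H →L[ℂ] H) - P : H →L[ℂ] H) : H →ₗ[ℂ] H)) M' := by
  have hPi : IsIdempotentElem P := hP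
  subst hPr
  rw [ContinuousLinearMap.toLinearMap_sub, ContinuousLinearMap.toLinearMap_one,
    ← LinearMap.IsIdempotentElem.ker_eq_range_one_sub hPi.toLinearMap]
  exact P.isCompl_ker_of_gapHat_lt hPi hM' hgap

theorem stmt_8 {H : Type*} [NormedAddCommGroup H] [InnerProductSpace ℂ H] [CompleteSpace H]
    (M M' : Submodule ℂ H) (hM : IsClosed (M : Set H)) (hM' : IsClosed (M' : Set H))
    (P : H →L[ℂ] H) (hP : P ∘L P = P) (hPr : LinearMap.range (P : H →ₗ[ℂ] H) = M)
    (hgap : gapHat (M : Set H) (M' : Set H) < 1 / (1 + ‖P‖)) :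
    IsCompl (LinearMap.range (((1 : H →L[ℂ] H) - P : H →L[ℂ] H) : H →ₗ[ℂ] H)) M' :=
  stmt_8_general M M' hM' P hP hPr hgap
end
end

section
/- Let X, Y be Hilbert spaces, A, E ∈ B(X,Y), Ā = A + E, and T ⊆ X, S ⊆ Y closed subspaces such that G = A_{T,S}^{(2)} exists. If ‖G‖·‖E‖ < 1, then Ā_{T,S}^{(2)} exists and Ā_{T,S}^{(2)} = (I_X + GE)^{-1}G = G(I_Y + EG)^{-1}. -/
noncomputable section

open ContinuousLinearMap

/-! Since `‖GE‖, ‖EG‖ ≤ ‖G‖‖E‖ < 1`, the Neumann series makes `1 + GE` and `1 + EG` invertible,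
and the push-through identity `(1 + GE)G = G(1 + EG)` gives `(1 + GE)⁻¹G = G(1 + EG)⁻¹ =: Ḡ`.
Then `Ḡ(A + E)Ḡ = (1 + GE)⁻¹(GAG + GEG)(1 + EG)⁻¹ = (1 + GE)⁻¹(1 + GE)G(1 + EG)⁻¹ = Ḡ`,
and composing `G` with an invertible operator on the right keeps its range `T`, on the left its
kernel `S`. -/

section PushThrough

variable {𝕜 V W : Type*} [NontriviallyNormedField 𝕜] [NormedAddCommGroup V] [NormedSpace 𝕜 V]
  [NormedAddCommGroup W] [NormedSpace 𝕜 W]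

theorem isUnit_one_add_comp_of_norm_mul_lt_one [CompleteSpace V] {G : W →L[𝕜] V}
    {E : V →L[𝕜] W} (h : ‖G‖ * ‖E‖ < 1) : IsUnit (1 + G ∘L E) := by
  rw [← sub_neg_eq_add]
  refine isUnit_one_sub_of_norm_lt_one ?_
  rw [norm_neg]
  exact (opNorm_comp_le G E).trans_lt h

theorem one_add_comp_comp_comm (G : W →L[𝕜] V) (E : V →L[𝕜] W) :
    (1 + G ∘L E) ∘L G = G ∘L (1 + E ∘L G) := by
  rw [add_comp, comp_add, comp_assoc]
  rfl

theorem inverse_one_add_comp_comp {G : W →L[𝕜] V} {E : V →L[𝕜] W}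
    (hu : IsUnit (1 + E ∘L G)) (hv : IsUnit (1 + G ∘L E)) :
    Ring.inverse (1 + G ∘L E) ∘L G = G ∘L Ring.inverse (1 + E ∘L G) :=
  calc Ring.inverse (1 + G ∘L E) ∘L G
      = Ring.inverse (1 + G ∘L E) ∘L (G ∘L (1 + E ∘L G)) ∘L Ring.inverse (1 + E ∘L G) := by
        rw [comp_assoc G, ← mul_def (1 + E ∘L G), Ring.mul_inverse_cancel _ hu]
        rfl
    _ = G ∘L Ring.inverse (1 + E ∘L G) := by
        rw [← one_add_comp_comp_comm, ← comp_assoc, ← comp_assoc, ← mul_def _ (1 + G ∘L E),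
          Ring.inverse_mul_cancel _ hv]
        rfl

theorem range_comp_of_isUnit (G : W →L[𝕜] V) {U : W →L[𝕜] W} (hU : IsUnit U) :
    LinearMap.range ((G ∘L U : W →L[𝕜] V) : W →ₗ[𝕜] V) = LinearMap.range (G : W →ₗ[𝕜] V) := by
  obtain ⟨u, rfl⟩ := hU
  exact LinearMap.range_comp_of_range_eq_top _
    (LinearMap.range_eq_top.mpr (ContinuousLinearEquiv.unitsEquiv 𝕜 W u).surjective)

theorem ker_comp_of_isUnit {U : V →L[𝕜] V} (hU : IsUnit U) (G : W →L[𝕜] V) :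
    LinearMap.ker ((U ∘L G : W →L[𝕜] V) : W →ₗ[𝕜] V) = LinearMap.ker (G : W →ₗ[𝕜] V) := by
  obtain ⟨u, rfl⟩ := hU
  exact LinearMap.ker_comp_of_ker_eq_bot _
    (LinearMap.ker_eq_bot_of_injective (ContinuousLinearEquiv.unitsEquiv 𝕜 V u).injective)

end PushThrough

theorem IsOuterInv.add {V W : Type*} [NormedAddCommGroup V] [NormedSpace ℂ V]
    [NormedAddCommGroup W] [NormedSpace ℂ W] {A E : V →L[ℂ] W} {T : Submodule ℂ V}
    {S : Submodule ℂ W} {G : W →L[ℂ] V} (hG : IsOuterInv A T S G)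
    (hu : IsUnit (1 + E ∘L G)) (hv : IsUnit (1 + G ∘L E)) :
    IsOuterInv (A + E) T S (G ∘L Ring.inverse (1 + E ∘L G)) := by
  obtain ⟨hGAG, rfl, rfl⟩ := hG
  have hGAEG : G ∘L ((A + E) ∘L G) = (1 + G ∘L E) ∘L G := by
    rw [add_comp, comp_add, hGAG, add_comp, comp_assoc]
    rfl
  refine ⟨?_, range_comp_of_isUnit G hu.ringInverse, ?_⟩
  · calc (G ∘L Ring.inverse (1 + E ∘L G)) ∘L ((A + E) ∘L G ∘L Ring.inverse (1 + E ∘L G))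
        = Ring.inverse (1 + G ∘L E) ∘L (G ∘L ((A + E) ∘L G)) ∘L Ring.inverse (1 + E ∘L G) := by
          nth_rw 1 [← inverse_one_add_comp_comp hu hv]
          simp only [comp_assoc]
      _ = G ∘L Ring.inverse (1 + E ∘L G) := by
          rw [hGAEG, ← comp_assoc, ← comp_assoc, ← mul_def _ (1 + G ∘L E),
            Ring.inverse_mul_cancel _ hv]
          rfl
  · rw [← inverse_one_add_comp_comp hu hv]
    exact ker_comp_of_isUnit hv.ringInverse G

variable {X Y : Type*} [NormedAddCommGroup X] [InnerProductSpace ℂ X] [CompleteSpace X]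
  [NormedAddCommGroup Y] [InnerProductSpace ℂ Y] [CompleteSpace Y]
theorem stmt_14_general (A E : X →L[ℂ] Y) (T : Submodule ℂ X) (S : Submodule ℂ Y)
    (G : Y →L[ℂ] X) (hG : IsOuterInv A T S G)
    (hE : ‖G‖ * ‖E‖ < 1) :
    ∃ Gbar : Y →L[ℂ] X, IsOuterInv (A + E) T S Gbar ∧
      Gbar = Ring.inverse (1 + G ∘L E) ∘L G ∧
      Gbar = G ∘L Ring.inverse (1 + E ∘L G) := by
  have hv := isUnit_one_add_comp_of_norm_mul_lt_one hE
  have hu := isUnit_one_add_comp_of_norm_mul_lt_one (G := E) (E := G) (by rwa [mul_comm])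
  exact ⟨_, hG.add hu hv, (inverse_one_add_comp_comp hu hv).symm, rfl⟩

theorem stmt_14 (A E : X →L[ℂ] Y) (T : Submodule ℂ X) (S : Submodule ℂ Y)
    (hT : IsClosed (T : Set X)) (hS : IsClosed (S : Set Y))
    (G : Y →L[ℂ] X) (hG : IsOuterInv A T S G)
    (hE : ‖G‖ * ‖E‖ < 1) :
    ∃ Gbar : Y →L[ℂ] X, IsOuterInv (A + E) T S Gbar ∧
      Gbar = Ring.inverse (1 + G ∘L E) ∘L G ∧
      Gbar = G ∘L Ring.inverse (1 + E ∘L G) :=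
  stmt_14_general A E T S G hG hE
end
end
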